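/- Let the number of switch configurations per room be finite and fix any deterministic strategy for the prisoners. Then there exists an assignment of initial room configurations and two visit schedules S1 and S2 such that: (1) under S1 the prisoners only ever visit a single room; (2) under S2 every prisoner visits every room infinitely often; and (3) the sequence of (prisoner, observed configuration before visit, configuration left after visit) events is identical in S1 and S2, so no prisoner can distinguish the two schedules. -/
import Mathlib


/-- A prisoner's observation history: the list of (configuration seen on entry,
configuration left on exit) for each of his visits so far. -/
abbrev Hist (C : Type) := List (C × C)

/-- A deterministic strategy: for each prisoner, a function from his history
and the configuration of the room he enters to the configuration he leaves the
room in, together with whether he declares. -/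
abbrev Strategy (n : ℕ) (C : Type) := Fin n → Hist C → C → C × Bool

/-- A schedule: who visits which room at each step. -/
abbrev Schedule (n r : ℕ) := ℕ → Fin n × Fin r

/-- Global state of an execution. -/
structure PState (n r : ℕ) (C : Type) where
  rooms : Fin r → C
  hist : Fin n → Hist C
  declared : Bool

/-- One visit of prisoner `v.1` to room `v.2`. -/
def pstep {n r : ℕ} {C : Type} (σ : Strategy n C) (v : Fin n × Fin r)
    (s : PState n r C) : PState n r C :=
  let cur := s.rooms v.2
  let a := σ v.1 (s.hist v.1) cur
  { rooms := Function.update s.rooms v.2 a.1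
    hist := Function.update s.hist v.1 (s.hist v.1 ++ [(cur, a.1)])
    declared := s.declared || a.2 }

/-- The state after `t` visits, starting from initial room configurations `init`. -/
def prun {n r : ℕ} {C : Type} (σ : Strategy n C) (sch : Schedule n r)
    (init : Fin r → C) : ℕ → PState n r C
  | 0 => ⟨init, fun _ => [], false⟩
  | t + 1 => pstep σ (sch t) (prun σ sch init t)

/-- A schedule is valid if every prisoner visits every room infinitely often. -/
def ValidSchedule {n r : ℕ} (sch : Schedule n r) : Prop :=
  ∀ (p : Fin n) (rm : Fin r), {t | sch t = (p, rm)}.Infinite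

/-- Prisoner `p` has visited room `rm` within the first `t` visits. -/
def VisitedBy {n r : ℕ} (sch : Schedule n r) (t : ℕ) (p : Fin n) (rm : Fin r) : Prop :=
  ∃ t' < t, sch t' = (p, rm)

/-- A strategy is winning for initial configurations `init` if under every
valid schedule some prisoner eventually declares, and every declaration occurs
only after each prisoner has visited every room at least once. -/
def Winning {n r : ℕ} {C : Type} (σ : Strategy n C) (init : Fin r → C) : Prop :=
  ∀ sch : Schedule n r, ValidSchedule sch →
    (∃ t, (prun σ sch init t).declared = true) ∧
    (∀ t, (prun σ sch init t).declared = true → ∀ p rm, VisitedBy sch t p rm)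

namespace IndAux


/-- Strictly increasing sequence of times in `T`, with gaps > `g`. -/
noncomputable def tseq (T : Set ℕ) (hT : T.Infinite) (g : ℕ) : ℕ → ℕ
  | 0 => (hT.exists_gt 0).choose
  | k + 1 => (hT.exists_gt (tseq T hT g k + g)).choose

lemma tseq_mem (T : Set ℕ) (hT : T.Infinite) (g : ℕ) : ∀ k, tseq T hT g k ∈ T
  | 0 => (hT.exists_gt 0).choose_spec.1
  | k + 1 => (hT.exists_gt (tseq T hT g k + g)).choose_spec.1

lemma tseq_pos (T : Set ℕ) (hT : T.Infinite) (g : ℕ) : 0 < tseq T hT g 0 :=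
  (hT.exists_gt 0).choose_spec.2

lemma tseq_gap (T : Set ℕ) (hT : T.Infinite) (g : ℕ) (k : ℕ) :
    tseq T hT g k + g < tseq T hT g (k + 1) :=
  (hT.exists_gt (tseq T hT g k + g)).choose_spec.2

lemma tseq_strictMono (T : Set ℕ) (hT : T.Infinite) (g : ℕ) :
    StrictMono (tseq T hT g) :=
  strictMono_nat_of_lt_succ fun k => lt_of_le_of_lt (Nat.le_add_right _ _) (tseq_gap T hT g k)

open Classical in
/-- number of `k` with `ts k ≤ t`, for a strictly increasing `ts` with `ts 0 ≥ 1`. -/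
noncomputable def cnt (ts : ℕ → ℕ) : ℕ → ℕ
  | 0 => 0
  | t + 1 => cnt ts t + if ∃ k, ts k = t + 1 then 1 else 0

lemma cnt_char (ts : ℕ → ℕ) (hmono : StrictMono ts) (h0 : 0 < ts 0) :
    ∀ t k, ts k ≤ t ↔ k < cnt ts t := by
  intro t
  induction t with
  | zero =>
    intro k
    simp only [cnt, Nat.not_lt_zero, iff_false, not_le]
    exact lt_of_lt_of_le h0 (hmono.monotone (Nat.zero_le k))
  | succ t ih =>
    intro k
    by_cases h : ∃ k0, ts k0 = t + 1
    · obtain ⟨k0, hk0⟩ := h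
      have hcnt : cnt ts (t + 1) = cnt ts t + 1 := by
        simp only [cnt]; rw [if_pos ⟨k0, hk0⟩]
      have hk0c : k0 = cnt ts t := by
        have h1 : ¬ k0 < cnt ts t := by
          rw [← ih k0]; omega
        have h2 : ∀ j < k0, j < cnt ts t := by
          intro j hj
          rw [← ih j]
          have := hmono hj
          omega
        by_contra hne
        have : cnt ts t < k0 := by omega
        exact absurd (h2 _ this) (lt_irrefl _)
      rw [hcnt]
      constructor
      · intro hle
        rcases Nat.lt_or_ge k0 k with h' | h'
        · exfalso
          have := hmono h'
          omega
        · omega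
      · intro hlt
        have : k ≤ k0 := by omega
        have := hmono.monotone this
        omega
    · have hcnt : cnt ts (t + 1) = cnt ts t := by
        simp only [cnt]; rw [if_neg h]; omega
      have hne : ts k ≠ t + 1 := fun hc => h ⟨k, hc⟩
      rw [hcnt, ← ih k]
      omega

lemma cnt_between (ts : ℕ → ℕ) (hmono : StrictMono ts) (h0 : 0 < ts 0)
    (k t : ℕ) (h1 : ts k ≤ t) (h2 : t < ts (k + 1)) : cnt ts t = k + 1 := by
  have hA : k < cnt ts t := (cnt_char ts hmono h0 t k).1 h1
  have hB : ¬ k + 1 < cnt ts t := by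
    rw [← cnt_char ts hmono h0 t (k + 1)]; omega
  omega

lemma cnt_switch (ts : ℕ → ℕ) (t : ℕ) (h : cnt ts t ≠ cnt ts (t + 1)) :
    ∃ k, ts k = t + 1 := by
  by_contra hc
  apply h
  simp only [cnt]
  rw [if_neg hc]
  omega



variable {n r : ℕ} {C : Type}

/-- In a single-room schedule, the run's history and active-room config only
depend on the initial config of that room. -/
lemma single_room (σ : Strategy n C) (sch : Schedule n r) (rm0 : Fin r)
    (hsch : ∀ t, (sch t).2 = rm0) (i1 i2 : Fin r → C) (h : i1 rm0 = i2 rm0) :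
    ∀ t, (prun σ sch i1 t).rooms rm0 = (prun σ sch i2 t).rooms rm0 ∧
      (prun σ sch i1 t).hist = (prun σ sch i2 t).hist := by
  intro t
  induction t with
  | zero => exact ⟨h, rfl⟩
  | succ t ih =>
    obtain ⟨hr, hh⟩ := ih
    simp only [prun, pstep]
    rw [hsch t] at *
    rw [hr, hh]
    constructor
    · rw [Function.update_self, Function.update_self]
    · rfl

lemma main_inv (σ : Strategy n C) (S1 S2 : Schedule n r) (A : ℕ → Fin r)
    (room0 : Fin r) (cstar : C) (init initA : Fin r → C)
    (hS1 : ∀ t, S1 t = ((S2 t).1, room0)) (hS2 : ∀ t, (S2 t).2 = A t)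
    (hA0 : A 0 = room0)
    (hinit0 : init room0 = initA room0)
    (hinit : ∀ rm, rm ≠ room0 → init rm = cstar)
    (hswitch : ∀ t, A t ≠ A (t + 1) →
      (prun σ S1 initA (t + 1)).rooms room0 = cstar) :
    ∀ t, (prun σ S2 init t).hist = (prun σ S1 initA t).hist ∧
      (prun σ S2 init t).rooms (A t) = (prun σ S1 initA t).rooms room0 ∧
      ∀ rm, rm ≠ A t → (prun σ S2 init t).rooms rm = cstar := by
  intro t
  induction t with
  | zero =>
    refine ⟨rfl, ?_, ?_⟩
    · simp only [prun, hA0, hinit0]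
    · intro rm hrm
      rw [hA0] at hrm
      exact hinit rm hrm
  | succ t ih =>
    obtain ⟨hh, hc, ho⟩ := ih
    have hp1 : (S1 t).1 = (S2 t).1 := by rw [hS1 t]
    have hcur : (prun σ S2 init t).rooms (S2 t).2
        = (prun σ S1 initA t).rooms (S1 t).2 := by
      rw [hS2 t, hS1 t, hc]
    have hhist : (prun σ S2 init t).hist (S2 t).1
        = (prun σ S1 initA t).hist (S1 t).1 := by rw [hh, hp1]
    -- the action is equal
    have hact : σ (S2 t).1 ((prun σ S2 init t).hist (S2 t).1)
          ((prun σ S2 init t).rooms (S2 t).2)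
        = σ (S1 t).1 ((prun σ S1 initA t).hist (S1 t).1)
          ((prun σ S1 initA t).rooms (S1 t).2) := by
      rw [hcur, hhist, hp1]
    have hd1 : (prun σ S1 initA (t + 1)).rooms room0
        = (σ (S1 t).1 ((prun σ S1 initA t).hist (S1 t).1)
            ((prun σ S1 initA t).rooms (S1 t).2)).1 := by
      simp only [prun, pstep]
      rw [hS1 t]
      exact Function.update_self _ _ _
    refine ⟨?_, ?_, ?_⟩
    · simp only [prun, pstep]
      rw [hh, hp1, hcur]
    · by_cases hA : A (t + 1) = A t
      · show (prun σ S2 init (t+1)).rooms (A (t+1)) = _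
        rw [hA, hd1, ← hact]
        simp only [prun, pstep]
        rw [← hS2 t]
        exact Function.update_self _ _ _
      · have hst := hswitch t (fun h => hA h.symm)
        rw [hst]
        show (pstep σ (S2 t) (prun σ S2 init t)).rooms (A (t + 1)) = cstar
        simp only [pstep]
        rw [Function.update_of_ne (by rw [hS2 t]; exact hA)]
        exact ho _ hA
    · intro rm hrm
      show (pstep σ (S2 t) (prun σ S2 init t)).rooms rm = cstar
      by_cases hA : rm = A t
      · have hsw : A t ≠ A (t + 1) := by rw [← hA]; exact hrm
        have hst := hswitch t hsw
        simp only [pstep]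
        rw [hA, ← hS2 t, Function.update_self, hact, ← hd1, hst]
      · simp only [pstep]
        rw [Function.update_of_ne (by rw [hS2 t]; exact hA)]
        exact ho _ hA


end IndAux

/-- Lemma: indistinguishable schedules. For a finite configuration
set and any deterministic strategy, there are initial configurations and two
schedules `S1`, `S2` such that `S1` only ever visits one room, `S2` is valid,
the same prisoner moves at each step in both, and each prisoner's observation
history is identical in the two executions at every time. -/
theorem indistinguishable_schedules (n r : ℕ) (C : Type) [Finite C] [Nonempty C]
    (hn : 0 < n) (hr : 0 < r) (σ : Strategy n C) :
    ∃ (init : Fin r → C) (S1 S2 : Schedule n r),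
      (∃ rm0 : Fin r, ∀ t, (S1 t).2 = rm0) ∧
      ValidSchedule S2 ∧
      (∀ t, (S1 t).1 = (S2 t).1) ∧
      (∀ (t : ℕ) (p : Fin n), (prun σ S1 init t).hist p = (prun σ S2 init t).hist p) := by

  classical
  obtain ⟨c0⟩ := ‹Nonempty C›
  set room0 : Fin r := ⟨0, hr⟩ with hroom0
  set pse : ℕ → Fin n := fun t => ⟨t % n, Nat.mod_lt t hn⟩ with hpse
  set S1 : Schedule n r := fun t => (pse t, room0) with hS1def
  set initA : Fin r → C := fun _ => c0 with hinitA
  set d : ℕ → C := fun t => (prun σ S1 initA t).rooms room0 with hd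
  obtain ⟨cstar, hfib⟩ := Finite.exists_infinite_fiber d
  have hT : {t | d t = cstar}.Infinite := Set.infinite_coe_iff.mp hfib
  set ts : ℕ → ℕ := IndAux.tseq _ hT (2 * n) with hts
  have tsmono : StrictMono ts := IndAux.tseq_strictMono _ hT (2 * n)
  have ts0 : 0 < ts 0 := IndAux.tseq_pos _ hT (2 * n)
  have tsgap : ∀ k, ts k + 2 * n < ts (k + 1) := IndAux.tseq_gap _ hT (2 * n)
  have tsmem : ∀ k, d (ts k) = cstar := IndAux.tseq_mem _ hT (2 * n)
  set A : ℕ → Fin r := fun t => ⟨IndAux.cnt ts t % r, Nat.mod_lt _ hr⟩ with hA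
  set S2 : Schedule n r := fun t => (pse t, A t) with hS2def
  set init : Fin r → C := fun rm => if rm = room0 then c0 else cstar with hinit
  have hA0 : A 0 = room0 := by
    rw [hA, hroom0]
    simp [IndAux.cnt]
  have hswitch : ∀ t, A t ≠ A (t + 1) →
      (prun σ S1 initA (t + 1)).rooms room0 = cstar := by
    intro t h
    have hcc : IndAux.cnt ts t ≠ IndAux.cnt ts (t + 1) := by
      intro hc
      apply h
      rw [hA]
      simp only [hc]
    obtain ⟨k, hk⟩ := IndAux.cnt_switch ts t hcc
    have := tsmem k
    rw [hk] at this
    exact this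
  have hinv := IndAux.main_inv σ S1 S2 A room0 cstar init initA
      (fun t => rfl) (fun t => rfl) hA0
      (by rw [hinit, hinitA]; simp)
      (fun rm hrm => by rw [hinit]; simp [hrm])
      hswitch
  have hsingle := IndAux.single_room σ S1 room0 (fun t => rfl) init initA
      (by rw [hinit, hinitA]; simp)
  refine ⟨init, S1, S2, ⟨room0, fun t => rfl⟩, ?_, fun t => rfl, ?_⟩
  · -- validity of S2
    intro p rm
    apply Set.infinite_of_forall_exists_gt
    intro N
    obtain ⟨j, hj⟩ := p
    obtain ⟨i, hi⟩ := rm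
    set M := r * (N + 2) with hM
    have hM1 : N + 2 ≤ M := Nat.le_mul_of_pos_left _ hr
    set k := M + i - 1 with hk
    have hk1 : k + 1 = M + i := by omega
    have hkmod : (k + 1) % r = i := by
      rw [hk1, hM, Nat.mul_add_mod]
      exact Nat.mod_eq_of_lt hi
    set a := ts k with ha
    obtain ⟨q, m, hqm, hmlt⟩ : ∃ q m, n * q + m = a ∧ m < n :=
      ⟨a / n, a % n, Nat.div_add_mod a n, Nat.mod_lt _ hn⟩
    set t := n * q + n + j with htdef
    have htmod : t % n = j := by
      have h1 : t = n * (q + 1) + j := by rw [htdef]; ring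
      rw [h1, Nat.mul_add_mod]
      exact Nat.mod_eq_of_lt hj
    have hta : a ≤ t := by omega
    have htb : t < ts (k + 1) := by
      have := tsgap k
      omega
    have hcnt : IndAux.cnt ts t = k + 1 :=
      IndAux.cnt_between ts tsmono ts0 k t hta htb
    have hNt : N < t := by
      have hka : k ≤ a := tsmono.le_apply
      omega
    refine ⟨t, ?_, hNt⟩
    show S2 t = (⟨j, hj⟩, ⟨i, hi⟩)
    rw [hS2def]
    refine Prod.ext ?_ ?_
    · exact Fin.ext htmod
    · show A t = ⟨i, hi⟩
      rw [hA]
      exact Fin.ext (by simp only [hcnt, hkmod])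
  · -- history equality
    intro t p
    rw [(hsingle t).2, (hinv t).1]
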